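/- In an order book, let bid and offer be prices with 0 < bid ≤ offer such that imb(bid) ≥ 0 and imb(offer) ≤ 0 (e.g., a market maker's bid and offer each carry enough notional to absorb the entire client imbalance). Then any volume-maximizing clearing price can be taken inside [bid, offer]: for every P > 0 there exists P' with bid ≤ P' ≤ offer and vol(P) ≤ vol(P'). In particular, for all P < bid, vol(P) ≤ vol(bid), and for all P > offer, vol(P) ≤ vol(offer). -/
import Mathlib


variable {ι : Type*}

open Classical in
/-- Total size of buy orders in `B` with price at least `P`. -/
noncomputable def buyVol (B : Finset ι) (price size : ι → ℝ) (P : ℝ) : ℝ :=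
  ∑ o ∈ B.filter (fun o => P ≤ price o), size o

open Classical in
/-- Total size of sell orders in `S` with price at most `P`. -/
noncomputable def sellVol (S : Finset ι) (price size : ι → ℝ) (P : ℝ) : ℝ :=
  ∑ o ∈ S.filter (fun o => price o ≤ P), size o

/-- Cleared volume at candidate clearing price `P`. -/
noncomputable def vol (B S : Finset ι) (price size : ι → ℝ) (P : ℝ) : ℝ :=
  min (buyVol B price size P / P) (sellVol S price size P)

/-- Imbalance at candidate clearing price `P`. -/
noncomputable def imb (B S : Finset ι) (price size : ι → ℝ) (P : ℝ) : ℝ :=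
  buyVol B price size P / P - sellVol S price size P

lemma buyVol_nonneg' (B : Finset ι) (price size : ι → ℝ)
    (hsize : ∀ o ∈ B, 0 < size o) (P : ℝ) : 0 ≤ buyVol B price size P := by
  classical
  apply Finset.sum_nonneg
  intro o ho
  exact (hsize o (Finset.mem_filter.1 ho).1).le

lemma buyVol_anti' (B : Finset ι) (price size : ι → ℝ)
    (hsize : ∀ o ∈ B, 0 < size o) {P Q : ℝ} (h : P ≤ Q) :
    buyVol B price size Q ≤ buyVol B price size P := by
  classical
  apply Finset.sum_le_sum_of_subset_of_nonneg
  · intro o ho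
    rw [Finset.mem_filter] at ho ⊢
    exact ⟨ho.1, h.trans ho.2⟩
  · intro o ho _
    exact (hsize o (Finset.mem_filter.1 ho).1).le

lemma sellVol_mono' (S : Finset ι) (price size : ι → ℝ)
    (hsize : ∀ o ∈ S, 0 < size o) {P Q : ℝ} (h : P ≤ Q) :
    sellVol S price size P ≤ sellVol S price size Q := by
  classical
  apply Finset.sum_le_sum_of_subset_of_nonneg
  · intro o ho
    rw [Finset.mem_filter] at ho ⊢
    exact ⟨ho.1, ho.2.trans h⟩
  · intro o ho _
    exact (hsize o (Finset.mem_filter.1 ho).1).le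

/-- If `imb(bid) ≥ 0` and `imb(offer) ≤ 0` for prices `0 < bid ≤ offer`, then
any volume-maximizing clearing price can be taken inside `[bid, offer]`: every
positive price is weakly dominated by some price in `[bid, offer]`; in
particular prices below `bid` are dominated by `bid` and prices above `offer`
are dominated by `offer`. -/
theorem clearing_price_inside_market [DecidableEq ι]
    (B S : Finset ι) (price size : ι → ℝ)
    (hprice : ∀ o ∈ B ∪ S, 0 < price o) (hsize : ∀ o ∈ B ∪ S, 0 < size o)
    (bid offer : ℝ) (hbid : 0 < bid) (hbo : bid ≤ offer)
    (h₁ : 0 ≤ imb B S price size bid) (h₂ : imb B S price size offer ≤ 0) :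
    (∀ P : ℝ, 0 < P → ∃ P', bid ≤ P' ∧ P' ≤ offer ∧
        vol B S price size P ≤ vol B S price size P') ∧
    (∀ P : ℝ, 0 < P → P < bid →
        vol B S price size P ≤ vol B S price size bid) ∧
    (∀ P : ℝ, offer < P →
        vol B S price size P ≤ vol B S price size offer) := by
  have hsB : ∀ o ∈ B, 0 < size o := fun o ho =>
    hsize o (Finset.mem_union_left _ ho)
  have hsS : ∀ o ∈ S, 0 < size o := fun o ho =>
    hsize o (Finset.mem_union_right _ ho)
  have hoffer : 0 < offer := hbid.trans_le hbo
  -- at bid: vol(bid) = sellVol(bid)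
  have hvbid : vol B S price size bid = sellVol S price size bid := by
    unfold vol
    rw [min_eq_right]
    unfold imb at h₁; linarith
  have hvoff : vol B S price size offer = buyVol B price size offer / offer := by
    unfold vol
    rw [min_eq_left]
    unfold imb at h₂; linarith
  have hlow : ∀ P : ℝ, 0 < P → P < bid →
      vol B S price size P ≤ vol B S price size bid := by
    intro P hP hPb
    rw [hvbid]
    calc vol B S price size P ≤ sellVol S price size P := min_le_right _ _
      _ ≤ sellVol S price size bid := sellVol_mono' S price size hsS hPb.le
  have hhigh : ∀ P : ℝ, offer < P →
      vol B S price size P ≤ vol B S price size offer := by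
    intro P hPo
    have hP : 0 < P := hoffer.trans hPo
    rw [hvoff]
    calc vol B S price size P ≤ buyVol B price size P / P := min_le_left _ _
      _ ≤ buyVol B price size P / offer := by
          apply div_le_div_of_nonneg_left (buyVol_nonneg' B price size hsB P) hoffer hPo.le
      _ ≤ buyVol B price size offer / offer := by
          gcongr
          exact buyVol_anti' B price size hsB hPo.le
  refine ⟨?_, hlow, hhigh⟩
  intro P hP
  rcases lt_or_ge P bid with h | h
  · exact ⟨bid, le_refl _, hbo, hlow P hP h⟩
  rcases le_or_gt P offer with h' | h'
  · exact ⟨P, h, h', le_refl _⟩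
  · exact ⟨offer, hbo, le_refl _, hhigh P h'⟩
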